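/- Let T be a 2×2 unitary matrix with overlap c = max_{k,l=1,2} |T_{lk}|. Then for every unit vector ψ ∈ ℂ² and all α, β ≥ 0, H_α(|ψ|²) + H_β(|Tψ|²) ≥ −2·log( (1 + c)/2 ) (the Deutsch-type bound). -/

import Mathlib

open Real

/-- Power with the convention `0 ^ λ = 0` for all `λ ≥ 0`. -/
noncomputable def pw (p lam : ℝ) : ℝ := if p = 0 then 0 else p ^ lam

/-- Rényi entropy of the two-point probability vector `(p₁, p₂)`:
`H_λ(p) = (1/(1-λ)) log (p₁^λ + p₂^λ)` for `λ ≠ 1`, Shannon entropy for `λ = 1`. -/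
noncomputable def Hren (lam p1 p2 : ℝ) : ℝ :=
  if lam = 1 then -(p1 * Real.log p1 + p2 * Real.log p2)
  else (1 - lam)⁻¹ * Real.log (pw p1 lam + pw p2 lam)

/-!
Both entropies are bounded below by min-entropies, `H_λ(p) ≥ -log (max p₁ p₂)`, so it suffices
to bound the product of the two largest probabilities by `((1 + c) / 2) ^ 2`. By AM–GM this
follows from the bound `1 + c` on their sum, an instance of the uncertainty relation
`|⟪u, x⟫|² + |⟪v, x⟫|² ≤ 1 + |⟪u, v⟫|` for unit vectors, applied to `u = e_k`, `v = T† e_l`.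
-/

section InnerProductSpace

variable {𝕜 E : Type*} [RCLike 𝕜] [NormedAddCommGroup E] [InnerProductSpace 𝕜 E]

theorem norm_inner_sq_add_norm_inner_sq_le {u v x : E} (hu : ‖u‖ = 1) (hv : ‖v‖ = 1)
    (hx : ‖x‖ = 1) :
    ‖inner 𝕜 u x‖ ^ 2 + ‖inner 𝕜 v x‖ ^ 2 ≤ 1 + ‖inner 𝕜 u v‖ := by
  set p := inner 𝕜 u x
  set q := inner 𝕜 v x
  set S := ‖p‖ ^ 2 + ‖q‖ ^ 2
  set z : E := p • u + q • v
  -- Cauchy–Schwarz against `z`, for which `⟪z, x⟫ = S`, gives `S ≤ ‖z‖`; expanding `‖z‖²`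
  -- gives `‖z‖² ≤ S * (1 + ‖⟪u, v⟫‖)`.
  have hzx : inner 𝕜 z x = (S : 𝕜) := by
    change inner 𝕜 (p • u + q • v) x = _
    rw [inner_add_left, inner_smul_left, inner_smul_left]
    change (starRingEnd 𝕜) p * p + (starRingEnd 𝕜) q * q = _
    simp only [S, RCLike.conj_mul]
    push_cast; ring
  have hSz : S ^ 2 ≤ ‖z‖ ^ 2 := by
    have := norm_inner_le_norm (𝕜 := 𝕜) z x
    rw [hzx, hx, mul_one, RCLike.norm_ofReal, abs_of_nonneg (by positivity)] at this
    exact pow_le_pow_left₀ (by positivity) this 2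
  have hcross : RCLike.re (inner 𝕜 (p • u) (q • v)) ≤ ‖p‖ * ‖q‖ * ‖inner 𝕜 u v‖ :=
    (RCLike.re_le_norm _).trans_eq (by simp [inner_smul_left, inner_smul_right]; ring)
  have hz : ‖z‖ ^ 2 ≤ S * (1 + ‖inner 𝕜 u v‖) := by
    have := norm_add_sq (𝕜 := 𝕜) (p • u) (q • v)
    simp only [norm_smul, hu, hv, mul_one] at this
    nlinarith [sq_nonneg (‖p‖ - ‖q‖), norm_nonneg (inner 𝕜 u v)]
  nlinarith [norm_nonneg (inner 𝕜 u v)]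

theorem ContinuousLinearMap.norm_inner_sq_add_norm_inner_map_sq_le [CompleteSpace E]
    {U : E →L[𝕜] E} (hU : U ∈ unitary (E →L[𝕜] E)) {u w x : E} (hu : ‖u‖ = 1)
    (hw : ‖w‖ = 1) (hx : ‖x‖ = 1) :
    ‖inner 𝕜 u x‖ ^ 2 + ‖inner 𝕜 w (U x)‖ ^ 2 ≤ 1 + ‖inner 𝕜 w (U u)‖ := by
  have hU' : adjoint U ∈ unitary (E →L[𝕜] E) := star_eq_adjoint U ▸ Unitary.star_mem hU
  have := norm_inner_sq_add_norm_inner_sq_le (𝕜 := 𝕜) hu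
    ((norm_map_of_mem_unitary hU' w).trans hw) hx
  rwa [adjoint_inner_left, adjoint_inner_right, norm_inner_symm (U u)] at this

end InnerProductSpace

namespace Matrix

variable {𝕜 n : Type*} [RCLike 𝕜] [Fintype n] [DecidableEq n] {T : Matrix n n 𝕜}

theorem sum_norm_mulVec_sq_of_mem_unitaryGroup (hT : T ∈ unitaryGroup n 𝕜) (ψ : n → 𝕜) :
    ∑ i, ‖(T *ᵥ ψ) i‖ ^ 2 = ∑ i, ‖ψ i‖ ^ 2 :=
  calc ∑ i, ‖(T *ᵥ ψ) i‖ ^ 2 = ‖WithLp.toLp 2 (T *ᵥ ψ)‖ ^ 2 := by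
        rw [EuclideanSpace.norm_sq_eq]
    _ = ‖WithLp.toLp 2 ψ‖ ^ 2 := by
      rw [← toEuclideanCLM_toLp, ContinuousLinearMap.norm_map_of_mem_unitary
        (Unitary.map_mem (toEuclideanCLM (n := n) (𝕜 := 𝕜)) hT)]
    _ = ∑ i, ‖ψ i‖ ^ 2 := by rw [EuclideanSpace.norm_sq_eq]

theorem norm_sq_add_norm_mulVec_sq_le_of_mem_unitaryGroup (hT : T ∈ unitaryGroup n 𝕜)
    {ψ : n → 𝕜} (hψ : ∑ i, ‖ψ i‖ ^ 2 = 1) (k l : n) :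
    ‖ψ k‖ ^ 2 + ‖(T *ᵥ ψ) l‖ ^ 2 ≤ 1 + ‖T l k‖ := by
  have hx : ‖WithLp.toLp 2 ψ‖ = 1 := by
    simp [EuclideanSpace.norm_eq, hψ]
  have := ContinuousLinearMap.norm_inner_sq_add_norm_inner_map_sq_le
    (Unitary.map_mem (toEuclideanCLM (n := n) (𝕜 := 𝕜)) hT) (u := EuclideanSpace.single k 1)
    (w := EuclideanSpace.single l 1) (by simp) (by simp) hx
  simpa [EuclideanSpace.inner_single_left, toEuclideanCLM_toLp] using this

end Matrix

theorem pw_nonneg {p : ℝ} (hp : 0 ≤ p) (lam : ℝ) : 0 ≤ pw p lam := by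
  unfold pw; split_ifs
  exacts [le_rfl, rpow_nonneg hp _]

theorem pw_pos {p : ℝ} (hp : 0 < p) (lam : ℝ) : 0 < pw p lam := by
  rw [pw, if_neg hp.ne']
  exact rpow_pos_of_pos hp lam

theorem pw_eq_mul_rpow_sub_one {p : ℝ} (hp : 0 ≤ p) (lam : ℝ) : pw p lam = p * p ^ (lam - 1) := by
  rcases hp.eq_or_lt with rfl | hp
  · simp [pw]
  · rw [pw, if_neg hp.ne', rpow_sub_one hp.ne', mul_div_cancel₀ _ hp.ne']

theorem mul_rpow_sub_one_le_pw {p m lam : ℝ} (hp : 0 ≤ p) (hpm : p ≤ m) (hlam : lam ≤ 1) :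
    p * m ^ (lam - 1) ≤ pw p lam := by
  rw [pw_eq_mul_rpow_sub_one hp]
  rcases hp.eq_or_lt with rfl | hp
  · simp
  · exact mul_le_mul_of_nonneg_left (rpow_le_rpow_of_nonpos hp hpm (by linarith)) hp.le

theorem pw_le_mul_rpow_sub_one {p m lam : ℝ} (hp : 0 ≤ p) (hpm : p ≤ m) (hlam : 1 ≤ lam) :
    pw p lam ≤ p * m ^ (lam - 1) := by
  rw [pw_eq_mul_rpow_sub_one hp]
  exact mul_le_mul_of_nonneg_left (rpow_le_rpow hp hpm (by linarith)) hp

theorem mul_log_le_mul_log {p m : ℝ} (hp : 0 ≤ p) (hpm : p ≤ m) : p * log p ≤ p * log m := by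
  rcases hp.eq_or_lt with rfl | hp
  · simp
  · exact mul_le_mul_of_nonneg_left (log_le_log hp hpm) hp.le

theorem max_pos_of_add_eq_one {p₁ p₂ : ℝ} (hs : p₁ + p₂ = 1) : 0 < max p₁ p₂ :=
  lt_max_iff.2 (by by_contra! h; linarith [h.1, h.2])

section TwoPoint

variable {p₁ p₂ : ℝ}

theorem rpow_sub_one_max_le_pw_add_pw (h₁ : 0 ≤ p₁) (h₂ : 0 ≤ p₂) (hs : p₁ + p₂ = 1) {lam : ℝ}
    (hlam : lam ≤ 1) : max p₁ p₂ ^ (lam - 1) ≤ pw p₁ lam + pw p₂ lam := by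
  have := add_le_add (mul_rpow_sub_one_le_pw h₁ (le_max_left p₁ p₂) hlam)
    (mul_rpow_sub_one_le_pw h₂ (le_max_right p₁ p₂) hlam)
  rwa [← add_mul, hs, one_mul] at this

theorem pw_add_pw_le_rpow_sub_one_max (h₁ : 0 ≤ p₁) (h₂ : 0 ≤ p₂) (hs : p₁ + p₂ = 1) {lam : ℝ}
    (hlam : 1 ≤ lam) : pw p₁ lam + pw p₂ lam ≤ max p₁ p₂ ^ (lam - 1) := by
  have := add_le_add (pw_le_mul_rpow_sub_one h₁ (le_max_left p₁ p₂) hlam)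
    (pw_le_mul_rpow_sub_one h₂ (le_max_right p₁ p₂) hlam)
  rwa [← add_mul, hs, one_mul] at this

theorem pw_add_pw_pos (h₁ : 0 ≤ p₁) (h₂ : 0 ≤ p₂) (hs : p₁ + p₂ = 1) (lam : ℝ) :
    0 < pw p₁ lam + pw p₂ lam := by
  rcases lt_max_iff.1 (max_pos_of_add_eq_one hs) with h | h
  · exact add_pos_of_pos_of_nonneg (pw_pos h lam) (pw_nonneg h₂ lam)
  · exact add_pos_of_nonneg_of_pos (pw_nonneg h₁ lam) (pw_pos h lam)

theorem neg_log_max_le_Hren (h₁ : 0 ≤ p₁) (h₂ : 0 ≤ p₂) (hs : p₁ + p₂ = 1) (lam : ℝ) :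
    -log (max p₁ p₂) ≤ Hren lam p₁ p₂ := by
  set m := max p₁ p₂
  have hm : 0 < m := max_pos_of_add_eq_one hs
  rcases lt_trichotomy lam 1 with hlt | rfl | hgt
  · rw [Hren, if_neg hlt.ne, le_inv_mul_iff₀ (by linarith)]
    calc (1 - lam) * -log m = log (m ^ (lam - 1)) := by rw [log_rpow hm]; ring
      _ ≤ log (pw p₁ lam + pw p₂ lam) :=
        log_le_log (rpow_pos_of_pos hm _) (rpow_sub_one_max_le_pw_add_pw h₁ h₂ hs hlt.le)
  · rw [Hren, if_pos rfl, neg_le_neg_iff]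
    calc p₁ * log p₁ + p₂ * log p₂ ≤ p₁ * log m + p₂ * log m :=
          add_le_add (mul_log_le_mul_log h₁ (le_max_left _ _))
            (mul_log_le_mul_log h₂ (le_max_right _ _))
      _ = log m := by rw [← add_mul, hs, one_mul]
  · rw [Hren, if_neg hgt.ne', ← neg_sub, inv_neg, neg_mul_comm, le_inv_mul_iff₀ (by linarith)]
    have := log_le_log (pw_add_pw_pos h₁ h₂ hs lam) (pw_add_pw_le_rpow_sub_one_max h₁ h₂ hs hgt.le)
    rw [log_rpow hm] at this
    linarith

end TwoPoint

theorem log_add_log_le_two_mul_log_half {a b s : ℝ} (ha : 0 < a) (hb : 0 < b) (h : a + b ≤ s) :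
    log a + log b ≤ 2 * log (s / 2) := by
  rw [← log_mul ha.ne' hb.ne', ← Nat.cast_ofNat, ← log_pow]
  exact log_le_log (mul_pos ha hb) (by nlinarith [sq_nonneg (a - b)])

theorem stmt_13_general (T : Matrix (Fin 2) (Fin 2) ℂ)
    (hT : T ∈ Matrix.unitaryGroup (Fin 2) ℂ)
    (c : ℝ)
    (hc : IsGreatest {x : ℝ | ∃ k l : Fin 2, x = ‖T l k‖} c)
    (α β : ℝ)
    (ψ : Fin 2 → ℂ)
    (hψ : ‖ψ 0‖ ^ 2 + ‖ψ 1‖ ^ 2 = 1) :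
    -2 * Real.log ((1 + c) / 2) ≤
      Hren α (‖ψ 0‖ ^ 2) (‖ψ 1‖ ^ 2) +
        Hren β (‖T.mulVec ψ 0‖ ^ 2) (‖T.mulVec ψ 1‖ ^ 2) := by
  have hψ' : ∑ i, ‖ψ i‖ ^ 2 = 1 := by rwa [Fin.sum_univ_two]
  have hTψ : ‖T.mulVec ψ 0‖ ^ 2 + ‖T.mulVec ψ 1‖ ^ 2 = 1 := by
    rw [← Fin.sum_univ_two (fun i ↦ ‖T.mulVec ψ i‖ ^ 2),
      Matrix.sum_norm_mulVec_sq_of_mem_unitaryGroup hT, hψ']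
  have hpair (k l : Fin 2) : ‖ψ k‖ ^ 2 + ‖T.mulVec ψ l‖ ^ 2 ≤ 1 + c :=
    (Matrix.norm_sq_add_norm_mulVec_sq_le_of_mem_unitaryGroup hT hψ' k l).trans
      (by linarith [hc.2 ⟨k, l, rfl⟩])
  set P := max (‖ψ 0‖ ^ 2) (‖ψ 1‖ ^ 2)
  set Q := max (‖T.mulVec ψ 0‖ ^ 2) (‖T.mulVec ψ 1‖ ^ 2)
  have hPQ : P + Q ≤ 1 + c := by
    simp only [P, Q, ← max_add_add_right, ← max_add_add_left]
    exact max_le (max_le (hpair 0 0) (hpair 1 0)) (max_le (hpair 0 1) (hpair 1 1))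
  calc -2 * log ((1 + c) / 2) ≤ -log P + -log Q := by
        linarith [log_add_log_le_two_mul_log_half (max_pos_of_add_eq_one hψ)
          (max_pos_of_add_eq_one hTψ) hPQ]
    _ ≤ _ := add_le_add (neg_log_max_le_Hren (by positivity) (by positivity) hψ α)
        (neg_log_max_le_Hren (by positivity) (by positivity) hTψ β)

/-- the Deutsch-type bound `H_α + H_β ≥ −2 log((1+c)/2)`. -/
theorem stmt_13 (T : Matrix (Fin 2) (Fin 2) ℂ)
    (hT : T ∈ Matrix.unitaryGroup (Fin 2) ℂ)
    (c : ℝ)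
    (hc : IsGreatest {x : ℝ | ∃ k l : Fin 2, x = ‖T l k‖} c)
    (α β : ℝ) (hα : 0 ≤ α) (hβ : 0 ≤ β)
    (ψ : Fin 2 → ℂ)
    (hψ : ‖ψ 0‖ ^ 2 + ‖ψ 1‖ ^ 2 = 1) :
    -2 * Real.log ((1 + c) / 2) ≤
      Hren α (‖ψ 0‖ ^ 2) (‖ψ 1‖ ^ 2) +
        Hren β (‖T.mulVec ψ 0‖ ^ 2) (‖T.mulVec ψ 1‖ ^ 2) :=
  stmt_13_general T hT c hc α β ψ hψ
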